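/- Let Γ be a group (with the discrete topology) and let (N_k)_{k∈ℕ} be a sequence of normal subgroups of Γ. Let ℕ⁺ = ℕ ∪ {∞} be the one-point compactification of ℕ, and consider on ℕ⁺ × Γ the equivalence relation (k,t) ~ (l,u) defined by: k = l, and t⁻¹u ∈ N_k when k ∈ ℕ, while t = u when k = ∞. Then the canonical quotient map from ℕ⁺ × Γ onto the quotient space (ℕ⁺ × Γ)/~ (with the quotient topology) is an open map. -/

import Mathlib

/-! The class of `(n, t)` with `n` finite is `{n} × t N n`, open since `{n}` is open in `ℕ⁺` and
`Γ` is discrete; the class of `(∞, t)` is a single point. So the saturation of an open set `U`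
is `U` together with the open classes meeting it, hence open. -/

open OnePoint

/-- The HLS equivalence relation on `ℕ⁺ × Γ`: `(k,t) ~ (l,u)` iff `k = l`, and
`t⁻¹ * u ∈ N k` when `k ∈ ℕ`, while `t = u` when `k = ∞`. -/
def hlsRel {Γ : Type*} [Group Γ] (N : ℕ → Subgroup Γ) :
    OnePoint ℕ × Γ → OnePoint ℕ × Γ → Prop := fun a b =>
  a.1 = b.1 ∧
    ((∃ n : ℕ, a.1 = (n : OnePoint ℕ) ∧ a.2⁻¹ * b.2 ∈ N n) ∨
      (a.1 = (∞ : OnePoint ℕ) ∧ a.2 = b.2))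

theorem isOpenMap_quot_mk_of_isOpen_or_subsingleton {X : Type*} [TopologicalSpace X]
    {r : X → X → Prop} (hr : Equivalence r)
    (hclass : ∀ x, IsOpen {y | r x y} ∨ ∀ y, r x y → y = x) :
    IsOpenMap (Quot.mk r) := by
  intro U hU
  rw [← isQuotientMap_quot_mk.isOpen_preimage, isOpen_iff_mem_nhds]
  have mem_saturation : ∀ {x y}, y ∈ U → r y x → x ∈ Quot.mk r ⁻¹' (Quot.mk r '' U) :=
    fun hy hyx => ⟨_, hy, Quot.sound hyx⟩
  rintro x ⟨y, hyU, hyx⟩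
  replace hyx : r y x := hr.eqvGen_iff.mp (Quot.eq.mp hyx)
  rcases hclass y with hopen | hsingle
  · exact Filter.mem_of_superset (hopen.mem_nhds hyx) fun z hz => mem_saturation hyU hz
  · obtain rfl := hsingle x hyx
    exact Filter.mem_of_superset (hU.mem_nhds hyU) fun z hz => mem_saturation hz (hr.refl z)

section hlsRel

variable {Γ : Type*} [Group Γ] (N : ℕ → Subgroup Γ)

theorem hlsRel_coe_iff (n : ℕ) (t : Γ) (b : OnePoint ℕ × Γ) :
    hlsRel N ((n : OnePoint ℕ), t) b ↔ b.1 = n ∧ t⁻¹ * b.2 ∈ N n := by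
  simp [hlsRel, eq_comm]

theorem hlsRel_infty_iff (t : Γ) (b : OnePoint ℕ × Γ) :
    hlsRel N (∞, t) b ↔ b = (∞, t) := by
  obtain ⟨l, u⟩ := b
  simp [hlsRel, eq_comm]

theorem hlsRel_equivalence : Equivalence (hlsRel N) where
  refl := by
    rintro ⟨k, t⟩
    induction k using OnePoint.rec with
    | infty => simp [hlsRel_infty_iff]
    | coe n => simp [hlsRel_coe_iff]
  symm := by
    rintro ⟨k, t⟩ ⟨l, u⟩ h
    induction k using OnePoint.rec with
    | infty => simp_all [hlsRel_infty_iff]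
    | coe n =>
      obtain ⟨rfl, h⟩ := (hlsRel_coe_iff N n t _).mp h
      refine (hlsRel_coe_iff N n u _).mpr ⟨rfl, ?_⟩
      simpa using (N n).inv_mem h
  trans := by
    rintro ⟨k, t⟩ ⟨l, u⟩ c hab hbc
    induction k using OnePoint.rec with
    | infty => simp_all [hlsRel_infty_iff]
    | coe n =>
      obtain ⟨rfl, htu⟩ := (hlsRel_coe_iff N n t _).mp hab
      obtain ⟨hc, huv⟩ := (hlsRel_coe_iff N n u c).mp hbc
      refine (hlsRel_coe_iff N n t c).mpr ⟨hc, ?_⟩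
      simpa [mul_assoc] using (N n).mul_mem htu huv

theorem setOf_hlsRel_coe (n : ℕ) (t : Γ) :
    {b | hlsRel N ((n : OnePoint ℕ), t) b} = {(n : OnePoint ℕ)} ×ˢ {u | t⁻¹ * u ∈ N n} := by
  ext b
  simp [hlsRel_coe_iff]

theorem isOpen_setOf_hlsRel_coe [TopologicalSpace Γ] [DiscreteTopology Γ] (n : ℕ) (t : Γ) :
    IsOpen {b | hlsRel N ((n : OnePoint ℕ), t) b} := by
  rw [setOf_hlsRel_coe]
  refine IsOpen.prod ?_ (isOpen_discrete _)
  simpa using isOpen_image_coe.mpr (isOpen_discrete {n})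

end hlsRel

theorem hls_quotient_map_isOpenMap_general {Γ : Type*} [Group Γ] [TopologicalSpace Γ]
    [DiscreteTopology Γ] (N : ℕ → Subgroup Γ) :
    IsOpenMap (Quot.mk (hlsRel N)) := by
  refine isOpenMap_quot_mk_of_isOpen_or_subsingleton (hlsRel_equivalence N) ?_
  rintro ⟨k, t⟩
  induction k using OnePoint.rec with
  | infty => exact Or.inr fun b hb => (hlsRel_infty_iff N t b).mp hb
  | coe n => exact Or.inl (isOpen_setOf_hlsRel_coe N n t)

theorem hls_quotient_map_isOpenMap {Γ : Type*} [Group Γ] [TopologicalSpace Γ]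
    [DiscreteTopology Γ] (N : ℕ → Subgroup Γ) (hnorm : ∀ k, (N k).Normal) :
    IsOpenMap (Quot.mk (hlsRel N)) :=
  hls_quotient_map_isOpenMap_general N
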